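/- (FQGMRES breakdown implies exactness) Assume A Z_j = V_j H_j + ω_j e_j* with V_j having orthonormal columns spanning a space containing r0 = β v₁ (β ≠ 0), H_j ∈ H^{j×j} nonsingular, and ω_j = 0 (breakdown, h_{j+1,j} = 0). Then y_j = H_j⁻¹ (β e₁) yields x_j = x0 + Z_j y_j with b − A x_j = 0, i.e., x_j is the exact solution. -/

import Mathlib

open scoped Quaternion Matrix
open Matrix

/-- The 2-norm of a quaternion vector. -/
noncomputable def vnorm {n : ℕ} (v : Fin n → ℍ[ℝ]) : ℝ :=
  Real.sqrt (∑ i, ‖v i‖ ^ 2)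

/-! Breakdown turns the Arnoldi relation into `A Z = V H`, so `A Z H⁻¹ = V`, and the correction
`Z H⁻¹ (β e₁)` is mapped by `A` to `V (β e₁) = β v₁ = r₀`. -/

theorem mulVec_invOf_of_mul_eq {m n k R : Type*} [Fintype n] [Fintype k] [DecidableEq k]
    [Semiring R] {A : Matrix m n R} {Z : Matrix n k R} {V : Matrix m k R}
    {H : Matrix k k R} [Invertible H] (h : A * Z = V * H) (y : k → R) :
    A *ᵥ (Z *ᵥ (⅟H *ᵥ y)) = V *ᵥ y := by
  rw [mulVec_mulVec, h, mulVec_mulVec, Matrix.mul_assoc, mul_invOf_self, Matrix.mul_one]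

theorem mulVec_single_algebraMap_of_col_eq_inv_smul {m n K R : Type*} [Fintype n]
    [DecidableEq n] [Field K] [Ring R] [Algebra K R] {V : Matrix m n R} {k : n} {β : K}
    {r : m → R} (hβ : β ≠ 0) (hcol : V.col k = β⁻¹ • r) :
    V *ᵥ Pi.single k (algebraMap K R β) = r := by
  funext i
  rw [mulVec_single, hcol, Pi.smul_apply, Pi.smul_apply, op_smul_eq_mul, ← Algebra.commutes,
    ← Algebra.smul_def, smul_smul, mul_inv_cancel₀ hβ, one_smul]

theorem fqgmres_breakdown_exact_general {n j : ℕ}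
    (A : Matrix (Fin n) (Fin n) ℍ[ℝ])
    (Z V : Matrix (Fin n) (Fin (j + 1)) ℍ[ℝ])
    (H : Matrix (Fin (j + 1)) (Fin (j + 1)) ℍ[ℝ]) [Invertible H]
    (b x0 r0 : Fin n → ℍ[ℝ]) (β : ℝ)
    (hr0 : r0 = b - A.mulVec x0)
    (hβ0 : β ≠ 0)
    (hv1 : (fun i => V i 0) = fun i => β⁻¹ • r0 i)
    (hbreak : A * Z = V * H) :
    b - A.mulVec (x0 + Z.mulVec
      ((⅟H).mulVec fun i : Fin (j + 1) => if i = 0 then (β : ℍ[ℝ]) else 0)) = 0 := by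
  have he₁ : (fun i : Fin (j + 1) => if i = 0 then (β : ℍ[ℝ]) else 0) =
      Pi.single 0 (algebraMap ℝ ℍ[ℝ] β) := by
    funext i
    simp [Pi.single_apply]
  rw [mulVec_add, mulVec_invOf_of_mul_eq hbreak, he₁,
    mulVec_single_algebraMap_of_col_eq_inv_smul hβ0 hv1, hr0]
  abel

theorem fqgmres_breakdown_exact {n j : ℕ}
    (A : Matrix (Fin n) (Fin n) ℍ[ℝ])
    (Z V : Matrix (Fin n) (Fin (j + 1)) ℍ[ℝ])
    (H : Matrix (Fin (j + 1)) (Fin (j + 1)) ℍ[ℝ]) [Invertible H]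
    (b x0 r0 : Fin n → ℍ[ℝ]) (β : ℝ)
    (hr0 : r0 = b - A.mulVec x0)
    (hβ : β = vnorm r0) (hβ0 : β ≠ 0)
    (horth : Vᴴ * V = 1)
    (hv1 : (fun i => V i 0) = fun i => β⁻¹ • r0 i)
    (hbreak : A * Z = V * H) :
    b - A.mulVec (x0 + Z.mulVec
      ((⅟H).mulVec fun i : Fin (j + 1) => if i = 0 then (β : ℍ[ℝ]) else 0)) = 0 :=
  fqgmres_breakdown_exact_general A Z V H b x0 r0 β hr0 hβ0 hv1 hbreak
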